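/- arXiv:1303.3980 — 5 statements merged into one kernel-verified Lean document; each statement's English description precedes it below -/
import Mathlib

section
/- Let k ≥ 1 and let ζ_j > −1, α_j > 0 be real numbers for j = 1,…,k. Let φ : ℝ^k → ℝ be the product of independent type-1 beta densities with parameters (ζ_j+1, α_j), i.e. φ(x) = ∏_{j=1}^k [Γ(α_j+ζ_j+1)/(Γ(ζ_j+1)Γ(α_j))] x_j^{ζ_j}(1−x_j)^{α_j−1} for x ∈ (0,1)^k and φ(x) = 0 otherwise, and let f : ℝ^k → [0,∞) be a measurable probability density vanishing outside (0,∞)^k. Then the pushforward of the product measure (volume.withDensity φ) ⊗ (volume.withDensity f) on ℝ^k × ℝ^k under the map (x, v) ↦ (x_1 v_1, …, x_k v_k) equals volume.withDensity g, where for u ∈ (0,∞)^k, g(u) = ∏_{j=1}^k [Γ(α_j+ζ_j+1)/Γ(ζ_j+1)] · (K^{(ζ,α)} f)(u), with K^{(ζ,α)} the multivariable Kober fractional integral operator of the second kind; equivalently, ∏_{j=1}^k [Γ(ζ_j+1)/Γ(α_j+ζ_j+1)] · g(u) = (K^{(ζ,α)} f)(u) for almost every u ∈ (0,∞)^k. 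-/
/-!
For fixed `v` with nonzero coordinates, `x ↦ v * x` is a diagonal linear map with Jacobian
`∏ v`, so `x * v` (with `x`, `v` independent with densities `φ`, `f`) has density
`u ↦ ∫ φ (u / v) f v / |∏ v| dv`. For the product beta density `φ`, the kernel
`φ (u / v) / ∏ v` is `∏ Γ(α+ζ+1)/Γ(ζ+1)` times the Kober kernel
`∏ u^ζ (v-u)^(α-1) v^(-ζ-α) / Γ(α)` on `0 < u < v` and vanishes elsewhere. Both factor measures
are finite, so the density is finite almost everywhere, which is what allows the Lebesgue
integral to be read as the Bochner integral in `kober2`.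
-/

open MeasureTheory Real Set
open scoped ENNReal

/-- The multivariable Kober fractional integral operator of the second kind with
parameters `(ζ j, α j)`, `j = 1,…,k`. -/
noncomputable def kober2 {k : ℕ} (ζ α : Fin k → ℝ) (f : (Fin k → ℝ) → ℝ)
    (u : Fin k → ℝ) : ℝ :=
  (∏ j, u j ^ ζ j / Real.Gamma (α j)) *
    ∫ v in {v : Fin k → ℝ | ∀ j, u j < v j},
      (∏ j, (v j - u j) ^ (α j - 1) * v j ^ (-ζ j - α j)) * f v

open ProbabilityTheory

theorem ofReal_setIntegral_eq_lintegral_ofReal_indicator {α : Type*} [MeasurableSpace α]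
    {μ : Measure α} {s : Set α} (hs : MeasurableSet s) {g : α → ℝ}
    (hg : AEStronglyMeasurable g (μ.restrict s)) (hg_nonneg : ∀ a ∈ s, 0 ≤ g a)
    (hg_fin : ∫⁻ a, ENNReal.ofReal (s.indicator g a) ∂μ ≠ ∞) :
    ENNReal.ofReal (∫ a in s, g a ∂μ) = ∫⁻ a, ENNReal.ofReal (s.indicator g a) ∂μ := by
  have hrestrict : ∫⁻ a, ENNReal.ofReal (s.indicator g a) ∂μ =
      ∫⁻ a in s, ENNReal.ofReal (g a) ∂μ := by
    rw [← lintegral_indicator hs]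
    congr with a
    by_cases ha : a ∈ s <;> simp [ha]
  rw [hrestrict] at hg_fin ⊢
  rw [integral_eq_lintegral_of_nonneg_ae (ae_restrict_of_forall_mem hs hg_nonneg) hg,
    ENNReal.ofReal_toReal hg_fin]

section MulConvolution

variable {ι : Type*} [Fintype ι]

theorem lintegral_comp_mul_left_pi {v : ι → ℝ} (hv : ∀ i, v i ≠ 0)
    {h : (ι → ℝ) → ℝ≥0∞} (hh : Measurable h) :
    ∫⁻ x, h (v * x) = ENNReal.ofReal |(∏ i, v i)⁻¹| * ∫⁻ u, h u := by
  classical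
  have hdet : (Matrix.diagonal v).det ≠ 0 := by
    rw [Matrix.det_diagonal]
    exact Finset.prod_ne_zero_iff.2 fun i _ => hv i
  have hL : ∀ x, v * x = Matrix.toLin' (Matrix.diagonal v) x := fun x => by
    ext i
    simp [Matrix.mulVec_diagonal]
  simp_rw [hL]
  rw [← lintegral_map hh (LinearMap.continuous_of_finiteDimensional _).measurable,
    Real.map_matrix_volume_pi_eq_smul_volume_pi hdet, lintegral_smul_measure,
    Matrix.det_diagonal, smul_eq_mul]

theorem ae_forall_ne_zero_pi : ∀ᵐ v : ι → ℝ, ∀ i, v i ≠ 0 :=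
  ae_all_iff.2 fun i =>
    (Measure.tendsto_eval_ae_ae (μ := fun _ : ι => (volume : Measure ℝ)) (i := i)).eventually
      (Measure.ae_ne volume 0)

theorem mconv_withDensity_volume_pi {f g : (ι → ℝ) → ℝ≥0∞} (hf : Measurable f)
    (hg : Measurable g) :
    volume.withDensity f ∗ₘ volume.withDensity g =
      volume.withDensity fun u =>
        ∫⁻ v, f (u / v) * ENNReal.ofReal |(∏ i, v i)⁻¹| * g v := by
  refine Measure.ext_of_lintegral _ fun φ hφ => ?_
  have hchange : ∀ᵐ v : ι → ℝ, ∫⁻ x, f x * g v * φ (x * v) =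
      ∫⁻ u, f (u / v) * ENNReal.ofReal |(∏ i, v i)⁻¹| * g v * φ u := by
    filter_upwards [ae_forall_ne_zero_pi] with v hv
    have hcancel : ∀ x, v * x / v = x := fun x => funext fun i => mul_div_cancel_left₀ _ (hv i)
    calc ∫⁻ x, f x * g v * φ (x * v)
        = ∫⁻ x, (fun u => f (u / v) * g v * φ u) (v * x) :=
          lintegral_congr fun x => by simp only [hcancel, mul_comm x v]
      _ = _ := by
          rw [lintegral_comp_mul_left_pi hv (h := fun u => f (u / v) * g v * φ u) (by fun_prop),
            ← lintegral_const_mul' _ _ ENNReal.ofReal_ne_top]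
          congr with u
          ring
  rw [Measure.lintegral_mconv_eq_lintegral_prod hφ, prod_withDensity hf hg,
    lintegral_withDensity_eq_lintegral_mul _ (by fun_prop) (by fun_prop),
    lintegral_withDensity_eq_lintegral_mul _ (by fun_prop) hφ,
    lintegral_prod_symm _ (by fun_prop)]
  simp only [Pi.mul_apply]
  rw [lintegral_congr_ae hchange, lintegral_lintegral_swap (by fun_prop)]
  exact lintegral_congr fun u => lintegral_mul_const _ (by fun_prop)

end MulConvolution

section BetaDensity

lemma betaPDFReal_nonneg {a b : ℝ} (ha : 0 < a) (hb : 0 < b) (x : ℝ) :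
    0 ≤ betaPDFReal a b x := by
  rw [betaPDFReal]
  split_ifs with hx
  · exact (betaPDFReal_pos hx.1 hx.2 ha hb).le.trans_eq (if_pos hx)
  · exact le_rfl

lemma integrable_betaPDFReal {a b : ℝ} (ha : 0 < a) (hb : 0 < b) :
    Integrable (betaPDFReal a b) := by
  refine ⟨(measurable_betaPDFReal a b).aestronglyMeasurable, ?_⟩
  rw [hasFiniteIntegral_iff_ofReal (.of_forall (betaPDFReal_nonneg ha hb))]
  exact (lintegral_betaPDF_eq_one ha hb).trans_lt ENNReal.one_lt_top

lemma isFiniteMeasure_withDensity_prod_betaPDFReal {ι : Type*} [Fintype ι] {a b : ι → ℝ}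
    (ha : ∀ j, 0 < a j) (hb : ∀ j, 0 < b j) :
    IsFiniteMeasure (volume.withDensity fun x : ι → ℝ =>
      ENNReal.ofReal (∏ j, betaPDFReal (a j) (b j) (x j))) :=
  isFiniteMeasure_withDensity_ofReal
    (Integrable.fintype_prod fun j => integrable_betaPDFReal (ha j) (hb j)).2

lemma betaPDFReal_add_one (ζ α x : ℝ) :
    betaPDFReal (ζ + 1) α x = if 0 < x ∧ x < 1 then
      Gamma (α + ζ + 1) / (Gamma (ζ + 1) * Gamma α) * (x ^ ζ * (1 - x) ^ (α - 1)) else 0 := by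
  simp only [betaPDFReal, ProbabilityTheory.beta, add_sub_cancel_right, one_div, inv_div,
    add_comm (ζ + 1) α, ← add_assoc, mul_assoc]

lemma indicator_prod_eq_prod_betaPDFReal {ι : Type*} [Fintype ι] (ζ α x : ι → ℝ) :
    indicator {x : ι → ℝ | ∀ j, 0 < x j ∧ x j < 1}
      (fun x => ∏ j, Gamma (α j + ζ j + 1) / (Gamma (ζ j + 1) * Gamma (α j)) *
        (x j ^ ζ j * (1 - x j) ^ (α j - 1))) x =
      ∏ j, betaPDFReal (ζ j + 1) (α j) (x j) := by
  simp only [betaPDFReal_add_one]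
  by_cases hx : ∀ j, 0 < x j ∧ x j < 1
  · simp [hx]
  · obtain ⟨j, hj⟩ := not_forall.1 hx
    rw [indicator_of_notMem (show x ∉ {x : ι → ℝ | ∀ j, 0 < x j ∧ x j < 1} from hx),
      Finset.prod_eq_zero (Finset.mem_univ j) (if_neg hj)]

lemma betaPDFReal_div_eq_zero {a b u v : ℝ} (hv : 0 < v) (h : ¬ (0 < u ∧ u < v)) :
    betaPDFReal a b (u / v) = 0 := by
  rw [betaPDFReal, if_neg]
  rwa [div_pos_iff_of_pos_right hv, div_lt_one hv]

lemma betaPDFReal_add_one_div_mul_inv {ζ α u v : ℝ} (hu : 0 < u) (huv : u < v) :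
    betaPDFReal (ζ + 1) α (u / v) * v⁻¹ = Gamma (α + ζ + 1) / Gamma (ζ + 1) *
      (u ^ ζ / Gamma α) * ((v - u) ^ (α - 1) * v ^ (-ζ - α)) := by
  have hv : 0 < v := hu.trans huv
  rw [betaPDFReal_add_one, if_pos ⟨div_pos hu hv, (div_lt_one hv).2 huv⟩,
    show 1 - u / v = (v - u) / v by field_simp, div_rpow hu.le hv.le,
    div_rpow (sub_pos.2 huv).le hv.le, show -ζ - α = -(ζ + (α - 1) + 1) by ring,
    rpow_neg hv.le, rpow_add hv, rpow_add hv, rpow_one]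
  have := (rpow_pos_of_pos hv ζ).ne'
  have := (rpow_pos_of_pos hv (α - 1)).ne'
  field_simp

end BetaDensity

/-- `koberKernel ζ α u v` is the conditional density at `u` of `(x j * v j)_j` when the `x j` are
independent beta variables with parameters `(ζ j + 1, α j)`, on the region `0 < u < v`. -/
noncomputable def koberKernel {ι : Type*} [Fintype ι] (ζ α u v : ι → ℝ) : ℝ :=
  (∏ j, Gamma (α j + ζ j + 1) / Gamma (ζ j + 1)) * (∏ j, u j ^ ζ j / Gamma (α j)) *
    ∏ j, (v j - u j) ^ (α j - 1) * v j ^ (-ζ j - α j)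

section KoberKernel

variable {ι : Type*} [Fintype ι] {ζ α : ι → ℝ}

lemma koberKernel_nonneg (hζ : ∀ j, -1 < ζ j) (hα : ∀ j, 0 < α j) {u v : ι → ℝ}
    (hu : ∀ j, 0 < u j) (huv : ∀ j, u j < v j) : 0 ≤ koberKernel ζ α u v := by
  refine mul_nonneg (mul_nonneg ?_ ?_) ?_ <;> refine Finset.prod_nonneg fun j _ => ?_
  · exact div_nonneg (Gamma_nonneg_of_nonneg (by linarith [hζ j, hα j]))
      (Gamma_nonneg_of_nonneg (by linarith [hζ j]))
  · exact div_nonneg (rpow_nonneg (hu j).le _) (Gamma_nonneg_of_nonneg (hα j).le)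
  · exact mul_nonneg (rpow_nonneg (sub_nonneg.2 (huv j).le) _)
      (rpow_nonneg ((hu j).trans (huv j)).le _)

lemma prod_betaPDFReal_div_mul_inv_eq_koberKernel {u v : ι → ℝ} (hv : ∀ j, 0 < v j) :
    (∏ j, betaPDFReal (ζ j + 1) (α j) (u j / v j)) * (∏ j, v j)⁻¹ =
      {v | ∀ j, 0 < u j ∧ u j < v j}.indicator (koberKernel ζ α u) v := by
  by_cases huv : ∀ j, 0 < u j ∧ u j < v j
  · rw [indicator_of_mem (show v ∈ {v : ι → ℝ | ∀ j, 0 < u j ∧ u j < v j} from huv),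
      koberKernel, ← Finset.prod_inv_distrib, ← Finset.prod_mul_distrib,
      ← Finset.prod_mul_distrib, ← Finset.prod_mul_distrib]
    exact Finset.prod_congr rfl fun j _ => betaPDFReal_add_one_div_mul_inv (huv j).1 (huv j).2
  · obtain ⟨j, hj⟩ := not_forall.1 huv
    rw [indicator_of_notMem (show v ∉ {v : ι → ℝ | ∀ j, 0 < u j ∧ u j < v j} from huv),
      Finset.prod_eq_zero (Finset.mem_univ j) (betaPDFReal_div_eq_zero (hv j) hj), zero_mul]

lemma ofReal_prod_betaPDFReal_div_mul_eq_koberKernel (hζ : ∀ j, -1 < ζ j) (hα : ∀ j, 0 < α j)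
    {f : (ι → ℝ) → ℝ} (hf_supp : ∀ v, ¬ (∀ j, 0 < v j) → f v = 0) (u v : ι → ℝ) :
    ENNReal.ofReal (∏ j, betaPDFReal (ζ j + 1) (α j) ((u / v) j)) *
        ENNReal.ofReal |(∏ j, v j)⁻¹| * ENNReal.ofReal (f v) =
      ENNReal.ofReal ({v | ∀ j, 0 < u j ∧ u j < v j}.indicator
        (fun v => koberKernel ζ α u v * f v) v) := by
  rw [indicator_mul_left]
  by_cases hv : ∀ j, 0 < v j
  · have hβ : 0 ≤ ∏ j, betaPDFReal (ζ j + 1) (α j) (u j / v j) :=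
      Finset.prod_nonneg fun j _ => betaPDFReal_nonneg (by linarith [hζ j]) (hα j) _
    have hvinv : 0 ≤ (∏ j, v j)⁻¹ := inv_nonneg.2 (Finset.prod_nonneg fun j _ => (hv j).le)
    rw [abs_of_nonneg hvinv, ← prod_betaPDFReal_div_mul_inv_eq_koberKernel hv,
      ENNReal.ofReal_mul (mul_nonneg hβ hvinv), ENNReal.ofReal_mul hβ]
    rfl
  · simp [hf_supp v hv]

end KoberKernel

lemma prod_Gamma_div_mul_kober2 {k : ℕ} (ζ α : Fin k → ℝ) (f : (Fin k → ℝ) → ℝ)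
    (u : Fin k → ℝ) :
    (∏ j, Gamma (α j + ζ j + 1) / Gamma (ζ j + 1)) * kober2 ζ α f u =
      ∫ v in {v : Fin k → ℝ | ∀ j, u j < v j}, koberKernel ζ α u v * f v := by
  rw [kober2, ← mul_assoc, ← integral_const_mul]
  simp only [koberKernel, mul_assoc]

lemma lintegral_ofReal_koberKernel_mul_eq_kober2 {k : ℕ} {ζ α : Fin k → ℝ} (hζ : ∀ j, -1 < ζ j)
    (hα : ∀ j, 0 < α j) {f : (Fin k → ℝ) → ℝ} (hf_meas : Measurable f)
    (hf_nonneg : ∀ x, 0 ≤ f x) {u : Fin k → ℝ}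
    (hfin : ∫⁻ v, ENNReal.ofReal ({v | ∀ j, 0 < u j ∧ u j < v j}.indicator
      (fun v => koberKernel ζ α u v * f v) v) ≠ ∞) :
    ∫⁻ v, ENNReal.ofReal ({v | ∀ j, 0 < u j ∧ u j < v j}.indicator
        (fun v => koberKernel ζ α u v * f v) v) =
      ENNReal.ofReal ({u : Fin k → ℝ | ∀ j, 0 < u j}.indicator
        (fun u => (∏ j, Gamma (α j + ζ j + 1) / Gamma (ζ j + 1)) * kober2 ζ α f u) u) := by
  by_cases hu : ∀ j, 0 < u j
  · have hT : {v : Fin k → ℝ | ∀ j, 0 < u j ∧ u j < v j} = {v | ∀ j, u j < v j} :=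
      ext fun v => ⟨fun h j => (h j).2, fun h j => ⟨hu j, h j⟩⟩
    have hS : MeasurableSet {v : Fin k → ℝ | ∀ j, u j < v j} := by
      simp only [Set.ofPred_forall]
      exact MeasurableSet.iInter fun j => measurableSet_lt measurable_const (measurable_pi_apply j)
    rw [hT] at hfin ⊢
    rw [indicator_of_mem (show u ∈ {u : Fin k → ℝ | ∀ j, 0 < u j} from hu),
      prod_Gamma_div_mul_kober2,
      ofReal_setIntegral_eq_lintegral_ofReal_indicator hS (by unfold koberKernel; fun_prop)
        (fun v hv => mul_nonneg (koberKernel_nonneg hζ hα hu hv) (hf_nonneg v)) hfin]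
  · have hT : {v : Fin k → ℝ | ∀ j, 0 < u j ∧ u j < v j} = ∅ :=
      eq_empty_iff_forall_notMem.2 fun v hv => hu fun j => (hv j).1
    simp [hT, hu]

theorem kober2_as_density_beta_general {k : ℕ} (ζ α : Fin k → ℝ)
    (hζ : ∀ j, -1 < ζ j) (hα : ∀ j, 0 < α j)
    (f : (Fin k → ℝ) → ℝ) (hf_meas : Measurable f) (hf_nonneg : ∀ x, 0 ≤ f x)
    (hf_supp : ∀ x, ¬ (∀ j, 0 < x j) → f x = 0)
    (hf_int : ∫⁻ x, ENNReal.ofReal (f x) = 1) :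
    Measure.map (fun p : (Fin k → ℝ) × (Fin k → ℝ) => fun j => p.1 j * p.2 j)
      ((volume.withDensity (fun x => ENNReal.ofReal
          (Set.indicator {x : Fin k → ℝ | ∀ j, 0 < x j ∧ x j < 1}
            (fun x => ∏ j, Real.Gamma (α j + ζ j + 1) /
              (Real.Gamma (ζ j + 1) * Real.Gamma (α j)) *
                (x j ^ ζ j * (1 - x j) ^ (α j - 1))) x))).prod
        (volume.withDensity fun v => ENNReal.ofReal (f v)))
    = volume.withDensity fun u => ENNReal.ofReal
        (Set.indicator {u : Fin k → ℝ | ∀ j, 0 < u j}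
          (fun u => (∏ j, Real.Gamma (α j + ζ j + 1) / Real.Gamma (ζ j + 1)) *
            kober2 ζ α f u) u) := by
  simp only [indicator_prod_eq_prod_betaPDFReal]
  set Φ : (Fin k → ℝ) → ℝ≥0∞ := fun x =>
    ENNReal.ofReal (∏ j, betaPDFReal (ζ j + 1) (α j) (x j))
  set F : (Fin k → ℝ) → ℝ≥0∞ := fun v => ENNReal.ofReal (f v)
  have hΦ : Measurable Φ := by fun_prop
  have hF : Measurable F := hf_meas.ennreal_ofReal
  have : IsFiniteMeasure (volume.withDensity Φ) :=
    isFiniteMeasure_withDensity_prod_betaPDFReal (fun j => by linarith [hζ j]) hα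
  have : IsFiniteMeasure (volume.withDensity F) :=
    isFiniteMeasure_withDensity (by simp [F, hf_int])
  change volume.withDensity Φ ∗ₘ volume.withDensity F = _
  have hfin : ∀ᵐ u, ∫⁻ v, Φ (u / v) * ENNReal.ofReal |(∏ j, v j)⁻¹| * F v < ∞ := by
    refine ae_lt_top (by fun_prop) ?_
    rw [← setLIntegral_univ, ← withDensity_apply _ .univ,
      ← mconv_withDensity_volume_pi hΦ hF]
    exact measure_ne_top _ _
  rw [mconv_withDensity_volume_pi hΦ hF]
  refine withDensity_congr_ae ?_
  filter_upwards [hfin] with u hu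
  simp only [Φ, F, ofReal_prod_betaPDFReal_div_mul_eq_koberKernel hζ hα hf_supp] at hu ⊢
  exact lintegral_ofReal_koberKernel_mul_eq_kober2 hζ hα hf_meas hf_nonneg hu.ne

/-- Theorem 1.1: if `x_1,…,x_k` are independent type-1 beta variables with parameters
`(ζ_j+1, α_j)` and `(v_1,…,v_k)` has an arbitrary joint density `f` on the positive
orthant, independent of the `x_j`, then the joint density `g` of `u_j = x_j v_j`
satisfies `(∏ Γ(ζ_j+1)/Γ(α_j+ζ_j+1)) g(u) = (K^{(ζ,α)} f)(u)` on the positive orthant. -/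
theorem kober2_as_density_beta {k : ℕ} (hk : 1 ≤ k) (ζ α : Fin k → ℝ)
    (hζ : ∀ j, -1 < ζ j) (hα : ∀ j, 0 < α j)
    (f : (Fin k → ℝ) → ℝ) (hf_meas : Measurable f) (hf_nonneg : ∀ x, 0 ≤ f x)
    (hf_supp : ∀ x, ¬ (∀ j, 0 < x j) → f x = 0)
    (hf_int : ∫⁻ x, ENNReal.ofReal (f x) = 1) :
    Measure.map (fun p : (Fin k → ℝ) × (Fin k → ℝ) => fun j => p.1 j * p.2 j)
      ((volume.withDensity (fun x => ENNReal.ofReal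
          (Set.indicator {x : Fin k → ℝ | ∀ j, 0 < x j ∧ x j < 1}
            (fun x => ∏ j, Real.Gamma (α j + ζ j + 1) /
              (Real.Gamma (ζ j + 1) * Real.Gamma (α j)) *
                (x j ^ ζ j * (1 - x j) ^ (α j - 1))) x))).prod
        (volume.withDensity fun v => ENNReal.ofReal (f v)))
    = volume.withDensity fun u => ENNReal.ofReal
        (Set.indicator {u : Fin k → ℝ | ∀ j, 0 < u j}
          (fun u => (∏ j, Real.Gamma (α j + ζ j + 1) / Real.Gamma (ζ j + 1)) *
            kober2 ζ α f u) u) :=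
  kober2_as_density_beta_general ζ α hζ hα f hf_meas hf_nonneg hf_supp hf_int
end

section
/- Let k ≥ 1, and for j = 1,…,k let ζ_j, α_j, s_j be real numbers with ζ_j > 0, α_j > 0 and s_j < 1 + ζ_j. Let f : ℝ^k → [0,∞] be a measurable function vanishing outside (0,∞)^k. Then, with equality in [0,∞], the multivariable Mellin transform of the Kober operator of the first kind satisfies ∫_{(0,∞)^k} (∏_{j=1}^k u_j^{s_j−1}) (I^{(ζ,α)} f)(u) du = (∏_{j=1}^k Γ(1+ζ_j−s_j)/Γ(1+α_j+ζ_j−s_j)) · ∫_{(0,∞)^k} (∏_{j=1}^k v_j^{s_j−1}) f(v) dv. -/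
/-!
By Tonelli, the Mellin transform of `I^{(ζ,α)} f` is the integral over `v > 0` of `f v` against
`∏_j ∫_{v_j}^∞ u^(s_j - 1) u^(-ζ_j - α_j) (u - v_j)^(α_j - 1) v_j^ζ_j du / Γ(α_j)`.
The substitution `u = v_j / t` turns the `j`-th factor into the Beta integral
`v_j^(s_j - 1) B(1 + ζ_j - s_j, α_j) / Γ(α_j) = v_j^(s_j - 1) Γ(1 + ζ_j - s_j) / Γ(1 + α_j + ζ_j - s_j)`.
-/

open MeasureTheory Real Set
open scoped ENNReal

/-- The multivariable Kober fractional integral operator of the first kind with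
parameters `(ζ j, α j)`, acting on `[0,∞]`-valued functions. -/
noncomputable def kober1E {k : ℕ} (ζ α : Fin k → ℝ) (f : (Fin k → ℝ) → ℝ≥0∞)
    (u : Fin k → ℝ) : ℝ≥0∞ :=
  ENNReal.ofReal (∏ j, u j ^ (-ζ j - α j) / Real.Gamma (α j)) *
    ∫⁻ v in {v : Fin k → ℝ | ∀ j, 0 < v j ∧ v j < u j},
      ENNReal.ofReal (∏ j, (u j - v j) ^ (α j - 1) * v j ^ ζ j) * f v

theorem lintegral_fin_nat_prod_eq_prod {n : ℕ} {E : Type*} [MeasurableSpace E]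
    {μ : Fin n → Measure E} [∀ i, SigmaFinite (μ i)]
    {f : Fin n → E → ℝ≥0∞} (hf : ∀ i, Measurable (f i)) :
    ∫⁻ x, ∏ i, f i (x i) ∂Measure.pi μ = ∏ i, ∫⁻ x, f i x ∂μ i := by
  induction n with
  | zero => simp
  | succ n ih =>
    calc _ = ∫⁻ x : E × (Fin n → E), f 0 x.1 * ∏ i : Fin n, f i.succ (x.2 i)
          ∂(μ 0).prod (Measure.pi fun i => μ i.succ) := by
          rw [← ((measurePreserving_piFinSuccAbove μ 0).symm).lintegral_comp_emb
            (MeasurableEquiv.measurableEmbedding _)]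
          simp_rw [MeasurableEquiv.piFinSuccAbove_symm_apply, Fin.insertNthEquiv,
            Fin.prod_univ_succ, Fin.insertNth_zero, Equiv.coe_fn_mk, Fin.cons_succ,
            Fin.zero_succAbove, cast_eq, Fin.cons_zero]
      _ = (∫⁻ x, f 0 x ∂μ 0) * ∫⁻ y, ∏ i : Fin n, f i.succ (y i) ∂Measure.pi fun i => μ i.succ :=
          lintegral_prod_mul (hf 0).aemeasurable
            (Finset.measurable_prod _ fun (i : Fin n) _ =>
              (hf i.succ).comp (measurable_pi_apply i)).aemeasurable
      _ = _ := by rw [ih fun i => hf i.succ, Fin.prod_univ_succ]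

theorem lintegral_setLIntegral_swap {α β : Type*} [MeasurableSpace α] [MeasurableSpace β]
    {μ : Measure α} {ν : Measure β} [SFinite μ] [SFinite ν] {T : Set (α × β)}
    (hT : MeasurableSet T) {g : α → β → ℝ≥0∞} (hg : Measurable (Function.uncurry g)) :
    ∫⁻ x, ∫⁻ y in Prod.mk x ⁻¹' T, g x y ∂ν ∂μ = ∫⁻ y, ∫⁻ x in (·, y) ⁻¹' T, g x y ∂μ ∂ν := by
  simp_rw [← lintegral_indicator (measurable_prodMk_left hT),
    ← lintegral_indicator (measurable_prodMk_right hT)]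
  exact lintegral_lintegral_swap (hg.indicator hT).aemeasurable

lemma support_setLIntegral_subset {α β : Type*} [MeasurableSpace β] {ν : Measure β}
    (S : α → Set β) (g : α → β → ℝ≥0∞) :
    Function.support (fun x => ∫⁻ y in S x, g x y ∂ν) ⊆ {x | (S x).Nonempty} := by
  intro x hx
  by_contra h
  simp [not_nonempty_iff_eq_empty.1 h] at hx

lemma lintegral_Ioo_rpow_mul_one_sub_rpow {c a : ℝ} (hc : 0 < c) (ha : 0 < a) :
    ∫⁻ t in Ioo (0 : ℝ) 1, ENNReal.ofReal (t ^ (c - 1) * (1 - t) ^ (a - 1))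
      = ENNReal.ofReal (ProbabilityTheory.beta c a) := by
  have hB := ProbabilityTheory.beta_pos hc ha
  have h := ProbabilityTheory.lintegral_betaPDF_eq_one hc ha
  simp_rw [ProbabilityTheory.lintegral_betaPDF, mul_assoc,
    ENNReal.ofReal_mul (one_div_pos.2 hB).le] at h
  rw [lintegral_const_mul' _ _ ENNReal.ofReal_ne_top, one_div, ENNReal.ofReal_inv_of_pos hB,
    mul_comm, ← div_eq_mul_inv, ENNReal.div_eq_one_iff (by simpa) ENNReal.ofReal_ne_top] at h
  exact h

lemma lintegral_Ioi_rpow_neg_add_mul_sub_rpow {c a v : ℝ} (hc : 0 < c) (ha : 0 < a)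
    (hv : 0 < v) :
    ∫⁻ u in Ioi v, ENNReal.ofReal (u ^ (-(c + a)) * (u - v) ^ (a - 1))
      = ENNReal.ofReal (v ^ (-c) * ProbabilityTheory.beta c a) := by
  have himage : (v / ·) '' Ioo (0 : ℝ) 1 = Ioi v := by
    ext u
    constructor
    · rintro ⟨t, ⟨ht0, ht1⟩, rfl⟩
      exact (lt_div_iff₀ ht0).2 (by nlinarith)
    · intro (hu : v < u)
      have hu0 : 0 < u := hv.trans hu
      exact ⟨v / u, ⟨by positivity, (div_lt_one hu0).2 hu⟩, by field_simp⟩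
  have hderiv : ∀ t ∈ Ioo (0 : ℝ) 1,
      HasDerivWithinAt (v / ·) (-(v / t ^ 2)) (Ioo 0 1) t := fun t ht => by
    simpa [div_eq_mul_inv] using ((hasDerivAt_inv ht.1.ne').const_mul v).hasDerivWithinAt
  have hinj : InjOn (v / ·) (Ioo (0 : ℝ) 1) := fun x hx y hy h => by
    simpa [div_eq_mul_inv, hv.ne'] using h
  have hjacobian : ∀ t ∈ Ioo (0 : ℝ) 1,
      |-(v / t ^ 2)| * ((v / t) ^ (-(c + a)) * (v / t - v) ^ (a - 1))
        = v ^ (-c) * (t ^ (c - 1) * (1 - t) ^ (a - 1)) := by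
    rintro t ⟨ht0, ht1⟩
    have hvt : 0 < v / t := div_pos hv ht0
    rw [abs_neg, abs_of_pos (by positivity), show v / t - v = v / t * (1 - t) by field_simp,
      mul_rpow hvt.le (by linarith), ← mul_assoc ((v / t) ^ _), ← rpow_add hvt,
      show -(c + a) + (a - 1) = -c - 1 by ring, div_rpow hv.le ht0.le, rpow_sub hv, rpow_sub ht0,
      rpow_sub ht0, rpow_one, rpow_one, rpow_neg ht0.le]
    field_simp
  rw [← himage, lintegral_image_eq_lintegral_abs_deriv_mul measurableSet_Ioo hderiv hinj,
    setLIntegral_congr_fun measurableSet_Ioo fun t ht => by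
      rw [← ENNReal.ofReal_mul (abs_nonneg _), hjacobian t ht,
        ENNReal.ofReal_mul (rpow_nonneg hv.le _)],
    lintegral_const_mul' _ _ ENNReal.ofReal_ne_top, lintegral_Ioo_rpow_mul_one_sub_rpow hc ha,
    ← ENNReal.ofReal_mul (rpow_nonneg hv.le _)]

noncomputable def koberMellinKernel (ζ α s u v : ℝ) : ℝ :=
  u ^ (s - 1) * (u ^ (-ζ - α) / Gamma α) * ((u - v) ^ (α - 1) * v ^ ζ)

lemma koberMellinKernel_nonneg {ζ α s u v : ℝ} (hα : 0 < α) (hv : 0 < v) (hvu : v < u) :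
    0 ≤ koberMellinKernel ζ α s u v := by
  have hu : 0 < u := hv.trans hvu
  exact mul_nonneg (mul_nonneg (rpow_nonneg hu.le _)
      (div_nonneg (rpow_nonneg hu.le _) (Gamma_pos_of_pos hα).le))
    (mul_nonneg (rpow_nonneg (sub_nonneg.2 hvu.le) _) (rpow_nonneg hv.le _))

lemma lintegral_Ioi_koberMellinKernel {ζ α s v : ℝ} (hα : 0 < α) (hs : s < 1 + ζ) (hv : 0 < v) :
    ∫⁻ u in Ioi v, ENNReal.ofReal (koberMellinKernel ζ α s u v)
      = ENNReal.ofReal (Gamma (1 + ζ - s) / Gamma (1 + α + ζ - s) * v ^ (s - 1)) := by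
  set c := 1 + ζ - s
  have hc : 0 < c := by linarith
  have hΓ := Gamma_pos_of_pos hα
  have hkernel : ∀ u ∈ Ioi v, ENNReal.ofReal (koberMellinKernel ζ α s u v)
      = ENNReal.ofReal (v ^ ζ / Gamma α) * ENNReal.ofReal (u ^ (-(c + α)) * (u - v) ^ (α - 1)) :=
    fun u hu => by
      rw [← ENNReal.ofReal_mul (div_nonneg (rpow_nonneg hv.le _) hΓ.le), koberMellinKernel,
        show -(c + α) = (s - 1) + (-ζ - α) by ring, rpow_add (hv.trans hu)]
      ring_nf
  rw [setLIntegral_congr_fun measurableSet_Ioi hkernel,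
    lintegral_const_mul' _ _ ENNReal.ofReal_ne_top,
    lintegral_Ioi_rpow_neg_add_mul_sub_rpow hc hα hv, ← ENNReal.ofReal_mul (by positivity),
    ProbabilityTheory.beta, show 1 + α + ζ - s = c + α by ring, show s - 1 = ζ + -c by ring,
    rpow_add hv]
  field_simp

lemma ofReal_prod_rpow_mul_kober1E {k : ℕ} {ζ α : Fin k → ℝ} (s : Fin k → ℝ)
    (hα : ∀ j, 0 < α j) (f : (Fin k → ℝ) → ℝ≥0∞) (u : Fin k → ℝ) :
    ENNReal.ofReal (∏ j, u j ^ (s j - 1)) * kober1E ζ α f u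
      = ∫⁻ v in {v | ∀ j, 0 < v j ∧ v j < u j},
          (∏ j, ENNReal.ofReal (koberMellinKernel (ζ j) (α j) (s j) (u j) (v j))) * f v := by
  rw [kober1E, ← mul_assoc, ← lintegral_const_mul' _ _ (by finiteness)]
  refine setLIntegral_congr_fun (by measurability) fun v hv => ?_
  have hu : ∀ j, 0 < u j := fun j => (hv j).1.trans (hv j).2
  have hΓ : ∀ j, 0 < Gamma (α j) := fun j => Gamma_pos_of_pos (hα j)
  have hweight : 0 ≤ ∏ j, u j ^ (s j - 1) := Finset.prod_nonneg fun j _ => rpow_nonneg (hu j).le _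
  have hfactor : 0 ≤ ∏ j, u j ^ (-ζ j - α j) / Gamma (α j) :=
    Finset.prod_nonneg fun j _ => div_nonneg (rpow_nonneg (hu j).le _) (hΓ j).le
  rw [← mul_assoc, ← ENNReal.ofReal_mul hweight, ← ENNReal.ofReal_mul (mul_nonneg hweight hfactor),
    ← Finset.prod_mul_distrib, ← Finset.prod_mul_distrib, ← ENNReal.ofReal_prod_of_nonneg
      fun j _ => koberMellinKernel_nonneg (hα j) (hv j).1 (hv j).2]
  rfl

lemma setLIntegral_prod_koberMellinKernel {k : ℕ} {ζ α s : Fin k → ℝ} (hα : ∀ j, 0 < α j)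
    (hs : ∀ j, s j < 1 + ζ j) {v : Fin k → ℝ} (hv : ∀ j, 0 < v j) :
    ∫⁻ u in {u : Fin k → ℝ | ∀ j, 0 < v j ∧ v j < u j},
        ∏ j, ENNReal.ofReal (koberMellinKernel (ζ j) (α j) (s j) (u j) (v j))
      = ENNReal.ofReal (∏ j, Gamma (1 + ζ j - s j) / Gamma (1 + α j + ζ j - s j)) *
          ENNReal.ofReal (∏ j, v j ^ (s j - 1)) := by
  have hsection : {u : Fin k → ℝ | ∀ j, 0 < v j ∧ v j < u j} = univ.pi fun j => Ioi (v j) := by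
    ext u; simp [hv]
  have hΓ : ∀ j, 0 ≤ Gamma (1 + ζ j - s j) / Gamma (1 + α j + ζ j - s j) := fun j =>
    div_nonneg (Gamma_pos_of_pos (by linarith [hs j])).le
      (Gamma_pos_of_pos (by linarith [hs j, hα j])).le
  rw [hsection, volume_pi, Measure.restrict_pi_pi,
    lintegral_fin_nat_prod_eq_prod
      (f := fun j x => ENNReal.ofReal (koberMellinKernel (ζ j) (α j) (s j) x (v j)))
      fun j => by unfold koberMellinKernel; fun_prop,
    Finset.prod_congr rfl fun j _ => lintegral_Ioi_koberMellinKernel (hα j) (hs j) (hv j),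
    ← ENNReal.ofReal_prod_of_nonneg fun j _ => mul_nonneg (hΓ j) (rpow_nonneg (hv j).le _),
    ← ENNReal.ofReal_mul (Finset.prod_nonneg fun j _ => hΓ j), ← Finset.prod_mul_distrib]

theorem mellin_kober1_general {k : ℕ} (ζ α s : Fin k → ℝ)
    (hα : ∀ j, 0 < α j) (hs : ∀ j, s j < 1 + ζ j)
    (f : (Fin k → ℝ) → ℝ≥0∞) (hf_meas : Measurable f) :
    ∫⁻ u in {u : Fin k → ℝ | ∀ j, 0 < u j},
        ENNReal.ofReal (∏ j, u j ^ (s j - 1)) * kober1E ζ α f u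
      = ENNReal.ofReal
          (∏ j, Real.Gamma (1 + ζ j - s j) / Real.Gamma (1 + α j + ζ j - s j)) *
          ∫⁻ v in {v : Fin k → ℝ | ∀ j, 0 < v j},
            ENNReal.ofReal (∏ j, v j ^ (s j - 1)) * f v := by
  let T : Set ((Fin k → ℝ) × (Fin k → ℝ)) := {p | ∀ j, 0 < p.2 j ∧ p.2 j < p.1 j}
  let K : (Fin k → ℝ) → (Fin k → ℝ) → ℝ≥0∞ := fun u v =>
    ∏ j, ENNReal.ofReal (koberMellinKernel (ζ j) (α j) (s j) (u j) (v j))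
  have hK : Measurable (Function.uncurry K) := by unfold K koberMellinKernel; fun_prop
  calc _ = ∫⁻ u, ∫⁻ v in Prod.mk u ⁻¹' T, K u v * f v := by
        simp only [ofReal_prod_rpow_mul_kober1E s hα]
        exact setLIntegral_eq_of_support_subset ((support_setLIntegral_subset _ _).trans
          fun u ⟨v, hv⟩ j => (hv j).1.trans (hv j).2)
    _ = ∫⁻ v, ∫⁻ u in (·, v) ⁻¹' T, K u v * f v :=
        lintegral_setLIntegral_swap (by measurability) (hK.mul (hf_meas.comp measurable_snd))
    _ = ∫⁻ v in {v | ∀ j, 0 < v j}, ENNReal.ofReal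
          (∏ j, Gamma (1 + ζ j - s j) / Gamma (1 + α j + ζ j - s j)) *
            (ENNReal.ofReal (∏ j, v j ^ (s j - 1)) * f v) := by
        rw [← setLIntegral_eq_of_support_subset (s := {v | ∀ j, 0 < v j})
          ((support_setLIntegral_subset _ _).trans fun v ⟨u, hu⟩ j => (hu j).1)]
        refine setLIntegral_congr_fun (by measurability) fun v hv => ?_
        have hKv : Measurable fun u => K u v := by unfold K koberMellinKernel; fun_prop
        rw [lintegral_mul_const _ hKv, ← mul_assoc]
        exact congrArg (· * f v) (setLIntegral_prod_koberMellinKernel hα hs hv)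
    _ = _ := lintegral_const_mul' _ _ ENNReal.ofReal_ne_top

/-- Theorem 2.2: the multivariable Mellin transform of the Kober fractional integral
operator of the first kind:
`M{I^{(ζ,α)} f; s} = (∏ Γ(1+ζ_j−s_j)/Γ(1+α_j+ζ_j−s_j)) f*(s_1,…,s_k)`
for `ζ_j > 0`, `α_j > 0`, `s_j < 1 + ζ_j`. -/
theorem mellin_kober1 {k : ℕ} (hk : 1 ≤ k) (ζ α s : Fin k → ℝ)
    (hζ : ∀ j, 0 < ζ j) (hα : ∀ j, 0 < α j) (hs : ∀ j, s j < 1 + ζ j)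
    (f : (Fin k → ℝ) → ℝ≥0∞) (hf_meas : Measurable f)
    (hf_supp : ∀ x, ¬ (∀ j, 0 < x j) → f x = 0) :
    ∫⁻ u in {u : Fin k → ℝ | ∀ j, 0 < u j},
        ENNReal.ofReal (∏ j, u j ^ (s j - 1)) * kober1E ζ α f u
      = ENNReal.ofReal
          (∏ j, Real.Gamma (1 + ζ j - s j) / Real.Gamma (1 + α j + ζ j - s j)) *
          ∫⁻ v in {v : Fin k → ℝ | ∀ j, 0 < v j},
            ENNReal.ofReal (∏ j, v j ^ (s j - 1)) * f v :=
  mellin_kober1_general ζ α s hα hs f hf_meas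
end

section
/- Let k ≥ 1 and let a_j > 0, q_j < 1, η_j > 0, ζ_j > 0 be real numbers for j = 1,…,k. Let φ be the product of independent pathway densities with exponent parameter ζ_j − 1, i.e. φ(x) = ∏_{j=1}^k c_j x_j^{ζ_j−1}[1 − a_j(1−q_j)x_j]^{η_j/(1−q_j)} for 0 < x_j < 1/(a_j(1−q_j)) (0 elsewhere), where c_j = [a_j(1−q_j)]^{ζ_j} Γ(ζ_j + η_j/(1−q_j) + 1)/(Γ(ζ_j) Γ(η_j/(1−q_j) + 1)). Let f : ℝ^k → [0,∞) be a measurable probability density vanishing outside (0,∞)^k. Then the pushforward of (volume.withDensity φ) ⊗ (volume.withDensity f) under the map (x, v) ↦ (v_1/x_1,…,v_k/x_k) equals volume.withDensity g, where for u ∈ (0,∞)^k, g(u) = (∏_{j=1}^k c_j u_j^{−ζ_j − η_j/(1−q_j) − 1}) · ∫_0^{u_1/(a_1(1−q_1))} ⋯ ∫_0^{u_k/(a_k(1−q_k))} (∏_{j=1}^k [u_j − a_j(1−q_j)v_j]^{η_j/(1−q_j)} v_j^{ζ_j}) f(v_1,…,v_k) dv_1⋯dv_k. -/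
/-!
Condition on `v`: the coordinatewise map `x ↦ v / x` is an involution of the open orthant with
Jacobian `∏ⱼ vⱼ / uⱼ²`, so `u = v / x` has density `∫ (∏ⱼ vⱼ / uⱼ²) φ(v / u) f(v) dv` there.
For the pathway density, with `bⱼ = aⱼ(1 - qⱼ)` and `pⱼ = ηⱼ / (1 - qⱼ)`, each factor
`(vⱼ / uⱼ²) cⱼ (vⱼ / uⱼ)^(ζⱼ-1) (1 - bⱼ vⱼ / uⱼ)^pⱼ` equals `cⱼ uⱼ^(-ζⱼ-pⱼ-1) (uⱼ - bⱼ vⱼ)^pⱼ vⱼ^ζⱼ`,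
and `vⱼ / uⱼ < 1 / bⱼ` iff `vⱼ < uⱼ / bⱼ`. The kernel is bounded on the box `∏ⱼ (0, uⱼ / bⱼ)` and
`f` is integrable, so the resulting lintegral is the finite Bochner integral of the statement.
-/

open MeasureTheory Real Set
open scoped ENNReal

noncomputable def pathwayC' (a q η ζ : ℝ) : ℝ :=
  (a * (1 - q)) ^ ζ * Real.Gamma (ζ + η / (1 - q) + 1) /
    (Real.Gamma ζ * Real.Gamma (η / (1 - q) + 1))

section RatioDensity

variable {k : ℕ}

lemma involutive_div_left {v : Fin k → ℝ} (hv : ∀ j, v j ≠ 0) :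
    Function.Involutive fun (u : Fin k → ℝ) j => v j / u j :=
  fun _ => funext fun j => div_div_cancel₀ (hv j)

lemma lintegral_orthant_comp_div_left {v : Fin k → ℝ} (hv : ∀ j, 0 < v j)
    (g : (Fin k → ℝ) → ℝ≥0∞) :
    ∫⁻ x in {x : Fin k → ℝ | ∀ j, 0 < x j}, g x
      = ∫⁻ u in {u : Fin k → ℝ | ∀ j, 0 < u j},
          ENNReal.ofReal (∏ j, v j / u j ^ 2) * g (fun j => v j / u j) := by
  set O : Set (Fin k → ℝ) := {x | ∀ j, 0 < x j}
  have hO : MeasurableSet O := by measurability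
  set σ : (Fin k → ℝ) → Fin k → ℝ := fun u j => v j / u j
  have hσ : Function.Involutive σ := involutive_div_left fun j => (hv j).ne'
  have himage : σ '' O = O := by
    rw [image_eq_preimage_of_inverse hσ.leftInverse hσ.rightInverse]
    ext u
    exact forall_congr' fun j => div_pos_iff_of_pos_left (hv j)
  have hderiv : ∀ u ∈ O, HasFDerivWithinAt σ (ContinuousLinearMap.pi fun j =>
      (ContinuousLinearMap.toSpanSingleton ℝ (-v j / u j ^ 2)).comp
        (ContinuousLinearMap.proj j)) O u := by
    intro u hu
    refine (hasFDerivAt_pi.2 fun j => ?_).hasFDerivWithinAt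
    have h : HasDerivAt (fun t => v j / t) (-v j / u j ^ 2) (u j) := by
      simpa [div_eq_mul_inv, neg_div] using (hasDerivAt_inv (hu j).ne').const_mul (v j)
    exact h.hasFDerivAt.comp u (hasFDerivAt_apply j u)
  conv_lhs => rw [← himage]
  rw [lintegral_image_eq_lintegral_abs_det_fderiv_mul volume hO hderiv hσ.injective.injOn]
  refine setLIntegral_congr_fun hO fun u hu => ?_
  simp only [ContinuousLinearMap.det_pi, ContinuousLinearMap.det_toSpanSingleton,
    Finset.abs_prod, abs_div, abs_neg, abs_of_pos (hv _), abs_pow, abs_of_pos (hu _)]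
  rfl

theorem map_div_prod_withDensity {Φ F : (Fin k → ℝ) → ℝ≥0∞} (hΦ : Measurable Φ)
    (hF : Measurable F) (hΦ_supp : ∀ x, ¬ (∀ j, 0 < x j) → Φ x = 0)
    (hF_supp : ∀ v, ¬ (∀ j, 0 < v j) → F v = 0) :
    Measure.map (fun p : (Fin k → ℝ) × (Fin k → ℝ) => fun j => p.2 j / p.1 j)
        ((volume.withDensity Φ).prod (volume.withDensity F))
      = volume.withDensity ({u : Fin k → ℝ | ∀ j, 0 < u j}.indicator fun u =>
          ∫⁻ v, ENNReal.ofReal (∏ j, v j / u j ^ 2) * Φ (fun j => v j / u j) * F v) := by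
  set O : Set (Fin k → ℝ) := {x | ∀ j, 0 < x j}
  have hO : MeasurableSet O := by measurability
  have hT : Measurable fun p : (Fin k → ℝ) × (Fin k → ℝ) => fun j => p.2 j / p.1 j := by
    fun_prop
  ext s hs
  have hinner : ∀ v, ∫⁻ x, Φ x * F v * s.indicator 1 (fun j => v j / x j)
      = ∫⁻ u in O, ENNReal.ofReal (∏ j, v j / u j ^ 2) * Φ (fun j => v j / u j) * F v
          * s.indicator 1 u := by
    intro v
    by_cases hv : v ∈ O
    · rw [← setLIntegral_eq_of_support_subset, lintegral_orthant_comp_div_left hv]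
      · refine setLIntegral_congr_fun hO fun u hu => ?_
        simp only [div_div_cancel₀ (hv _).ne']
        ring
      · exact Function.support_subset_iff'.2 fun x hx => by simp [hΦ_supp x hx]
    · simp [hF_supp v hv]
  calc Measure.map _ _ s
      = ∫⁻ v, ∫⁻ x, Φ x * F v * s.indicator 1 (fun j => v j / x j) := by
        rw [Measure.map_apply hT hs, prod_withDensity hΦ hF, withDensity_apply _ (hT hs),
          ← lintegral_indicator (hT hs), lintegral_prod_symm]
        · refine lintegral_congr fun v => lintegral_congr fun x => ?_
          by_cases h : (fun j => v j / x j) ∈ s <;> simp [h]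
        · exact (((hΦ.comp measurable_fst).mul (hF.comp measurable_snd)).indicator
            (hT hs)).aemeasurable
    _ = ∫⁻ v, ∫⁻ u in O, ENNReal.ofReal (∏ j, v j / u j ^ 2) * Φ (fun j => v j / u j) * F v
          * s.indicator 1 u := lintegral_congr hinner
    _ = ∫⁻ u in O, ∫⁻ v, ENNReal.ofReal (∏ j, v j / u j ^ 2) * Φ (fun j => v j / u j) * F v
          * s.indicator 1 u := lintegral_lintegral_swap (by fun_prop (disch := measurability))
    _ = _ := by
      rw [withDensity_apply _ hs, ← lintegral_indicator hs, ← lintegral_indicator hO]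
      refine lintegral_congr fun u => ?_
      by_cases hu : u ∈ O <;> by_cases hus : u ∈ s <;> simp [hu, hus]

end RatioDensity

section Pathway

lemma sub_mul_pos_of_lt_div {b u v : ℝ} (hb : 0 < b) (h : v < u / b) : 0 < u - b * v :=
  sub_pos.2 ((lt_div_iff₀' hb).1 h)

lemma div_pos_lt_one_div_iff {b u v : ℝ} (hb : 0 < b) (hu : 0 < u) :
    (0 < v / u ∧ v / u < 1 / b) ↔ (0 < v ∧ v < u / b) := by
  rw [div_pos_iff_of_pos_right hu, div_lt_div_iff₀ hu hb, one_mul, lt_div_iff₀ hb, mul_comm]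

lemma pathway_kernel_div_eq {b c ζ p u v : ℝ} (hu : 0 < u) (hv : 0 < v) (hw : 0 ≤ u - b * v) :
    v / u ^ 2 * (c * ((v / u) ^ (ζ - 1) * (1 - b * (v / u)) ^ p))
      = c * u ^ (-ζ - p - 1) * ((u - b * v) ^ p * v ^ ζ) := by
  have hsub : 1 - b * (v / u) = (u - b * v) / u := by field_simp
  have hpow : u ^ (-ζ - p - 1) = (u ^ (ζ - 1) * u ^ p * u ^ 2)⁻¹ := by
    rw [← rpow_natCast, ← rpow_add hu, ← rpow_add hu, ← rpow_neg hu.le]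
    congr 1
    push_cast
    ring
  rw [hsub, div_rpow hw hu.le, div_rpow hv.le hu.le, hpow, rpow_sub_one hv.ne']
  have := rpow_pos_of_pos hu (ζ - 1)
  have := rpow_pos_of_pos hu p
  field_simp

lemma pathway_kernel_nonneg {b p ζ u v : ℝ} (hb : 0 < b) (hv : 0 < v ∧ v < u / b) :
    0 ≤ (u - b * v) ^ p * v ^ ζ :=
  mul_nonneg (rpow_nonneg (sub_mul_pos_of_lt_div hb hv.2).le _) (rpow_nonneg hv.1.le _)

lemma pathway_kernel_le {b p ζ u v : ℝ} (hb : 0 < b) (hp : 0 ≤ p) (hζ : 0 ≤ ζ)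
    (hv : 0 < v ∧ v < u / b) :
    (u - b * v) ^ p * v ^ ζ ≤ u ^ p * (u / b) ^ ζ := by
  have hw : 0 < u - b * v := sub_mul_pos_of_lt_div hb hv.2
  have hwu : u - b * v ≤ u := sub_le_self _ (mul_pos hb hv.1).le
  exact mul_le_mul (rpow_le_rpow hw.le hwu hp) (rpow_le_rpow hv.1.le hv.2.le hζ)
    (rpow_nonneg hv.1.le _) (rpow_nonneg (hw.trans_le hwu).le _)

lemma pathwayC'_pos {a q η ζ : ℝ} (ha : 0 < a) (hq : q < 1) (hη : 0 < η) (hζ : 0 < ζ) :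
    0 < pathwayC' a q η ζ := by
  have hp : 0 < η / (1 - q) := div_pos hη (sub_pos.2 hq)
  exact div_pos
    (mul_pos (rpow_pos_of_pos (mul_pos ha (sub_pos.2 hq)) _) (Gamma_pos_of_pos (by linarith)))
    (mul_pos (Gamma_pos_of_pos hζ) (Gamma_pos_of_pos (by linarith)))

variable {k : ℕ}

def posBox (w : Fin k → ℝ) : Set (Fin k → ℝ) := {x | ∀ j, 0 < x j ∧ x j < w j}

lemma measurableSet_posBox (w : Fin k → ℝ) : MeasurableSet (posBox w) := by
  unfold posBox
  measurability

variable (b p c ζ : Fin k → ℝ)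

noncomputable def pathwayDensity (x : Fin k → ℝ) : ℝ :=
  (posBox fun j => 1 / b j).indicator
    (fun x => ∏ j, c j * (x j ^ (ζ j - 1) * (1 - b j * x j) ^ p j)) x

noncomputable def pathwayKernel (u v : Fin k → ℝ) : ℝ :=
  ∏ j, (u j - b j * v j) ^ p j * v j ^ ζ j

noncomputable def pathwayKober1 (f : (Fin k → ℝ) → ℝ) (u : Fin k → ℝ) : ℝ :=
  (∏ j, c j * u j ^ (-ζ j - p j - 1)) *
    ∫ v in posBox fun j => u j / b j, pathwayKernel b p ζ u v * f v

lemma measurable_pathwayDensity : Measurable (pathwayDensity b p c ζ) :=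
  Measurable.indicator (by fun_prop) (measurableSet_posBox _)

lemma pathwayDensity_eq_zero_of_not_pos {x : Fin k → ℝ} (hx : ¬ ∀ j, 0 < x j) :
    pathwayDensity b p c ζ x = 0 :=
  indicator_of_notMem (fun h => hx fun j => (h j).1) _

variable {b p c ζ}

lemma pathwayKernel_nonneg (hb : ∀ j, 0 < b j) {u v : Fin k → ℝ}
    (hv : v ∈ posBox fun j => u j / b j) : 0 ≤ pathwayKernel b p ζ u v :=
  Finset.prod_nonneg fun j _ => pathway_kernel_nonneg (hb j) (hv j)

lemma div_mem_posBox_iff (hb : ∀ j, 0 < b j) {u v : Fin k → ℝ} (hu : ∀ j, 0 < u j) :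
    ((fun j => v j / u j) ∈ posBox fun j => 1 / b j) ↔ v ∈ posBox fun j => u j / b j :=
  forall_congr' fun j => div_pos_lt_one_div_iff (hb j) (hu j)

lemma ofReal_mul_pathwayDensity_div (hb : ∀ j, 0 < b j) (hc : ∀ j, 0 ≤ c j)
    (f : (Fin k → ℝ) → ℝ) {u : Fin k → ℝ} (hu : ∀ j, 0 < u j) (v : Fin k → ℝ) :
    ENNReal.ofReal (∏ j, v j / u j ^ 2) *
        ENNReal.ofReal (pathwayDensity b p c ζ fun j => v j / u j) * ENNReal.ofReal (f v)
      = ENNReal.ofReal (∏ j, c j * u j ^ (-ζ j - p j - 1)) *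
        (posBox fun j => u j / b j).indicator
          (fun v => ENNReal.ofReal (pathwayKernel b p ζ u v * f v)) v := by
  by_cases hv : v ∈ posBox fun j => u j / b j
  · rw [pathwayDensity, indicator_of_mem ((div_mem_posBox_iff hb hu).2 hv),
      indicator_of_mem hv]
    have hA : 0 ≤ ∏ j, v j / u j ^ 2 :=
      Finset.prod_nonneg fun j _ => div_nonneg (hv j).1.le (sq_nonneg _)
    have hC : 0 ≤ ∏ j, c j * u j ^ (-ζ j - p j - 1) :=
      Finset.prod_nonneg fun j _ => mul_nonneg (hc j) (rpow_nonneg (hu j).le _)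
    have hAB : (∏ j, v j / u j ^ 2) *
          ∏ j, c j * ((v j / u j) ^ (ζ j - 1) * (1 - b j * (v j / u j)) ^ p j)
        = (∏ j, c j * u j ^ (-ζ j - p j - 1)) * pathwayKernel b p ζ u v := by
      simp only [pathwayKernel, ← Finset.prod_mul_distrib]
      exact Finset.prod_congr rfl fun j _ =>
        pathway_kernel_div_eq (hu j) (hv j).1 (sub_mul_pos_of_lt_div (hb j) (hv j).2).le
    rw [← ENNReal.ofReal_mul hA, hAB, ENNReal.ofReal_mul hC,
      ENNReal.ofReal_mul (pathwayKernel_nonneg hb hv), mul_assoc]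
  · rw [pathwayDensity, indicator_of_notMem (mt (div_mem_posBox_iff hb hu).1 hv),
      indicator_of_notMem hv]
    simp

lemma integrableOn_pathwayKernel_mul (hb : ∀ j, 0 < b j) (hp : ∀ j, 0 ≤ p j)
    (hζ : ∀ j, 0 ≤ ζ j) {f : (Fin k → ℝ) → ℝ} (hf : Integrable f) (u : Fin k → ℝ) :
    IntegrableOn (fun v => pathwayKernel b p ζ u v * f v) (posBox fun j => u j / b j) := by
  refine hf.integrableOn.bdd_mul (c := ∏ j, u j ^ p j * (u j / b j) ^ ζ j)
    (by unfold pathwayKernel; fun_prop) ?_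
  refine (ae_restrict_iff' (measurableSet_posBox _)).2 (ae_of_all _ fun v hv => ?_)
  rw [Real.norm_of_nonneg (pathwayKernel_nonneg hb hv)]
  exact Finset.prod_le_prod (fun j _ => pathway_kernel_nonneg (hb j) (hv j))
    fun j _ => pathway_kernel_le (hb j) (hp j) (hζ j) (hv j)

lemma lintegral_ratio_pathwayDensity (hb : ∀ j, 0 < b j) (hp : ∀ j, 0 ≤ p j)
    (hζ : ∀ j, 0 ≤ ζ j) (hc : ∀ j, 0 ≤ c j) {f : (Fin k → ℝ) → ℝ} (hf : Integrable f)
    (hf_nonneg : ∀ x, 0 ≤ f x) {u : Fin k → ℝ} (hu : ∀ j, 0 < u j) :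
    ∫⁻ v, ENNReal.ofReal (∏ j, v j / u j ^ 2) *
        ENNReal.ofReal (pathwayDensity b p c ζ fun j => v j / u j) * ENNReal.ofReal (f v)
      = ENNReal.ofReal (pathwayKober1 b p c ζ f u) := by
  have hC : 0 ≤ ∏ j, c j * u j ^ (-ζ j - p j - 1) :=
    Finset.prod_nonneg fun j _ => mul_nonneg (hc j) (rpow_nonneg (hu j).le _)
  simp_rw [ofReal_mul_pathwayDensity_div hb hc f hu]
  rw [lintegral_const_mul' _ _ ENNReal.ofReal_ne_top, lintegral_indicator (measurableSet_posBox _),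
    pathwayKober1, ENNReal.ofReal_mul hC, ofReal_integral_eq_lintegral_ofReal
      (integrableOn_pathwayKernel_mul hb hp hζ hf u)]
  exact (ae_restrict_iff' (measurableSet_posBox _)).2 (ae_of_all _ fun v hv =>
    mul_nonneg (pathwayKernel_nonneg hb hv) (hf_nonneg v))

theorem map_div_prod_pathwayDensity (hb : ∀ j, 0 < b j) (hp : ∀ j, 0 ≤ p j)
    (hζ : ∀ j, 0 ≤ ζ j) (hc : ∀ j, 0 ≤ c j) {f : (Fin k → ℝ) → ℝ} (hf_meas : Measurable f)
    (hf_nonneg : ∀ x, 0 ≤ f x) (hf_supp : ∀ x, ¬ (∀ j, 0 < x j) → f x = 0)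
    (hf : Integrable f) :
    Measure.map (fun p : (Fin k → ℝ) × (Fin k → ℝ) => fun j => p.2 j / p.1 j)
        ((volume.withDensity fun x => ENNReal.ofReal (pathwayDensity b p c ζ x)).prod
          (volume.withDensity fun v => ENNReal.ofReal (f v)))
      = volume.withDensity fun u =>
          ENNReal.ofReal ({u : Fin k → ℝ | ∀ j, 0 < u j}.indicator (pathwayKober1 b p c ζ f) u) := by
  rw [map_div_prod_withDensity (measurable_pathwayDensity b p c ζ).ennreal_ofReal
    hf_meas.ennreal_ofReal
    (fun x hx => by rw [pathwayDensity_eq_zero_of_not_pos b p c ζ hx, ENNReal.ofReal_zero])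
    (fun v hv => by rw [hf_supp v hv, ENNReal.ofReal_zero])]
  congr 1
  funext u
  by_cases hu : u ∈ {u : Fin k → ℝ | ∀ j, 0 < u j}
  · rw [indicator_of_mem hu, indicator_of_mem hu]
    exact lintegral_ratio_pathwayDensity hb hp hζ hc hf hf_nonneg hu
  · rw [indicator_of_notMem hu, indicator_of_notMem hu, ENNReal.ofReal_zero]

end Pathway

theorem pathway_kober1_density_general {k : ℕ} (a q η ζ : Fin k → ℝ)
    (ha : ∀ j, 0 < a j) (hq : ∀ j, q j < 1) (hη : ∀ j, 0 < η j) (hζ : ∀ j, 0 < ζ j)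
    (f : (Fin k → ℝ) → ℝ) (hf_meas : Measurable f) (hf_nonneg : ∀ x, 0 ≤ f x)
    (hf_supp : ∀ x, ¬ (∀ j, 0 < x j) → f x = 0)
    (hf_int : ∫⁻ x, ENNReal.ofReal (f x) = 1) :
    Measure.map (fun p : (Fin k → ℝ) × (Fin k → ℝ) => fun j => p.2 j / p.1 j)
      ((volume.withDensity (fun x => ENNReal.ofReal
          (Set.indicator
            {x : Fin k → ℝ | ∀ j, 0 < x j ∧ x j < 1 / (a j * (1 - q j))}
            (fun x => ∏ j, pathwayC' (a j) (q j) (η j) (ζ j) *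
              (x j ^ (ζ j - 1) *
                (1 - a j * (1 - q j) * x j) ^ (η j / (1 - q j)))) x))).prod
        (volume.withDensity fun v => ENNReal.ofReal (f v)))
    = volume.withDensity fun u => ENNReal.ofReal
        (Set.indicator {u : Fin k → ℝ | ∀ j, 0 < u j}
          (fun u => (∏ j, pathwayC' (a j) (q j) (η j) (ζ j) *
              u j ^ (-ζ j - η j / (1 - q j) - 1)) *
            ∫ v in {v : Fin k → ℝ |
                ∀ j, 0 < v j ∧ v j < u j / (a j * (1 - q j))},
              (∏ j, (u j - a j * (1 - q j) * v j) ^ (η j / (1 - q j)) *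
                v j ^ ζ j) * f v) u) := by
  have h1q : ∀ j, 0 < 1 - q j := fun j => sub_pos.2 (hq j)
  have hf : Integrable f := ⟨hf_meas.aestronglyMeasurable,
    (hasFiniteIntegral_iff_ofReal (ae_of_all _ hf_nonneg)).2 (hf_int ▸ ENNReal.one_lt_top)⟩
  exact map_div_prod_pathwayDensity (fun j => mul_pos (ha j) (h1q j))
    (fun j => (div_pos (hη j) (h1q j)).le) (fun j => (hζ j).le)
    (fun j => (pathwayC'_pos (ha j) (hq j) (hη j) (hζ j)).le) hf_meas hf_nonneg hf_supp hf

/-- Theorem 2.3: if `x_1,…,x_k` are independent pathway distributed variables with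
parameters `a_j, q_j, η_j` and exponent parameter `ζ_j − 1`, and `(v_1,…,v_k)` has an
arbitrary joint density `f` on the positive orthant, independent of the `x_j`, then
the joint density of `u_j = v_j/x_j` is given by the pathway-extended multivariable
Kober representation of the first kind (2.8). -/
theorem pathway_kober1_density {k : ℕ} (hk : 1 ≤ k) (a q η ζ : Fin k → ℝ)
    (ha : ∀ j, 0 < a j) (hq : ∀ j, q j < 1) (hη : ∀ j, 0 < η j) (hζ : ∀ j, 0 < ζ j)
    (f : (Fin k → ℝ) → ℝ) (hf_meas : Measurable f) (hf_nonneg : ∀ x, 0 ≤ f x)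
    (hf_supp : ∀ x, ¬ (∀ j, 0 < x j) → f x = 0)
    (hf_int : ∫⁻ x, ENNReal.ofReal (f x) = 1) :
    Measure.map (fun p : (Fin k → ℝ) × (Fin k → ℝ) => fun j => p.2 j / p.1 j)
      ((volume.withDensity (fun x => ENNReal.ofReal
          (Set.indicator
            {x : Fin k → ℝ | ∀ j, 0 < x j ∧ x j < 1 / (a j * (1 - q j))}
            (fun x => ∏ j, pathwayC' (a j) (q j) (η j) (ζ j) *
              (x j ^ (ζ j - 1) *
                (1 - a j * (1 - q j) * x j) ^ (η j / (1 - q j)))) x))).prod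
        (volume.withDensity fun v => ENNReal.ofReal (f v)))
    = volume.withDensity fun u => ENNReal.ofReal
        (Set.indicator {u : Fin k → ℝ | ∀ j, 0 < u j}
          (fun u => (∏ j, pathwayC' (a j) (q j) (η j) (ζ j) *
              u j ^ (-ζ j - η j / (1 - q j) - 1)) *
            ∫ v in {v : Fin k → ℝ |
                ∀ j, 0 < v j ∧ v j < u j / (a j * (1 - q j))},
              (∏ j, (u j - a j * (1 - q j) * v j) ^ (η j / (1 - q j)) *
                v j ^ ζ j) * f v) u) :=
  pathway_kober1_density_general a q η ζ ha hq hη hζ f hf_meas hf_nonneg hf_supp hf_int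
end

section
/- Let k ≥ 1 and let Φ : ℝ^k → ℝ^k be the map defined by Φ(y)_j = y_j · ∏_{i=1}^{j−1}(1 − y_i) for j = 1,…,k. Then Φ is differentiable, and for every y the determinant of its derivative (Jacobian determinant) equals ∏_{j=1}^{k}(1 − y_j)^{k−j}; in particular, on the open cube (0,1)^k the absolute value of the Jacobian determinant is ∏_{j=1}^{k−1}(1 − y_j)^{k−j}. -/
/-!
Coordinate `j` of `Φ` depends only on `y_i` for `i ≤ j`, so the Jacobian matrix is lower
triangular with diagonal entries `∂Φ_j/∂y_j = ∏_{i<j} (1 - y_i)`. In the product of these, the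
factor `1 - y_i` occurs once for every `j > i`, i.e. `k - 1 - i` times
(indices of `Fin k` start at `0`).
-/

open Finset ContinuousLinearMap

theorem LinearMap.det_eq_prod_of_isLowerTriangular {ι R : Type*} [Fintype ι] [LinearOrder ι]
    [CommRing R] (f : (ι → R) →ₗ[R] ι → R)
    (hf : ∀ i j, i < j → f (Pi.single j 1) i = 0) :
    f.det = ∏ i, f (Pi.single i 1) i := by
  rw [← LinearMap.det_toMatrix']
  exact Matrix.det_of_isLowerTriangular _ fun i j hij => hf i j hij

theorem Finset.prod_prod_Iio_eq_prod_pow_card_Ioi {ι M : Type*} [Fintype ι] [LinearOrder ι]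
    [LocallyFiniteOrderBot ι] [LocallyFiniteOrderTop ι] [CommMonoid M] (f : ι → M) :
    ∏ j, ∏ i ∈ Finset.Iio j, f i = ∏ i, f i ^ #(Finset.Ioi i) := by
  rw [prod_comm' (t' := univ) (s' := Finset.Ioi) (by simp)]
  exact prod_congr rfl fun i _ => prod_const _

theorem hasFDerivAt_prod_one_sub {ι : Type*} [Fintype ι] [DecidableEq ι] (s : Finset ι)
    (y : ι → ℝ) :
    HasFDerivAt (fun y : ι → ℝ => ∏ i ∈ s, (1 - y i))
      (∑ i ∈ s, (∏ i' ∈ s.erase i, (1 - y i')) • -(proj i : (ι → ℝ) →L[ℝ] ℝ)) y :=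
  HasFDerivAt.finsetProd fun i _ =>
    ((hasFDerivAt_const 1 y).sub (hasFDerivAt_apply i y)).congr_fderiv (zero_sub _)

section StickBreaking

variable {ι : Type*} [LinearOrder ι] [LocallyFiniteOrderBot ι]

/-- The map `Φ`, the stick-breaking parametrisation of Dirichlet-type densities. -/
def stickBreaking (y : ι → ℝ) : ι → ℝ := fun j => y j * ∏ i ∈ Finset.Iio j, (1 - y i)

noncomputable def stickBreakingFDeriv (y : ι → ℝ) : (ι → ℝ) →L[ℝ] ι → ℝ :=
  pi fun j => y j • ∑ i ∈ Finset.Iio j, (∏ i' ∈ (Finset.Iio j).erase i, (1 - y i')) • -proj i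
    + (∏ i ∈ Finset.Iio j, (1 - y i)) • proj j

theorem hasFDerivAt_stickBreaking [Fintype ι] (y : ι → ℝ) :
    HasFDerivAt stickBreaking (stickBreakingFDeriv y) y :=
  hasFDerivAt_pi.2 fun j => (hasFDerivAt_apply j y).mul (hasFDerivAt_prod_one_sub _ y)

theorem stickBreakingFDeriv_single_apply {y : ι → ℝ} {i j : ι} (hij : i ≤ j) :
    stickBreakingFDeriv y (Pi.single j 1) i =
      if i = j then ∏ l ∈ Finset.Iio j, (1 - y l) else 0 := by
  have hvanish : ∑ l ∈ Finset.Iio i, (∏ l' ∈ (Finset.Iio i).erase l, (1 - y l')) •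
      -(Pi.single j (1 : ℝ) : ι → ℝ) l = 0 :=
    sum_eq_zero fun l hl => by simp [((mem_Iio.1 hl).trans_le hij).ne]
  simp only [stickBreakingFDeriv, pi_apply, add_apply, smul_apply, _root_.sum_apply, neg_apply,
    proj_apply]
  rw [hvanish, smul_zero, zero_add, smul_eq_mul, Pi.single_apply, mul_ite, mul_one, mul_zero]
  split_ifs with h
  · rw [h]
  · rfl

theorem det_stickBreakingFDeriv [Fintype ι] (y : ι → ℝ) :
    (stickBreakingFDeriv y).det = ∏ j, ∏ i ∈ Finset.Iio j, (1 - y i) := by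
  rw [ContinuousLinearMap.det, LinearMap.det_eq_prod_of_isLowerTriangular]
  · exact prod_congr rfl fun j _ => by
      simpa using stickBreakingFDeriv_single_apply (y := y) le_rfl
  · intro i j hij
    simpa [hij.ne] using stickBreakingFDeriv_single_apply (y := y) hij.le

theorem det_fderiv_stickBreaking [Fintype ι] [LocallyFiniteOrderTop ι] (y : ι → ℝ) :
    (fderiv ℝ stickBreaking y).det = ∏ i, (1 - y i) ^ #(Finset.Ioi i) := by
  rw [(hasFDerivAt_stickBreaking y).fderiv, det_stickBreakingFDeriv,
    prod_prod_Iio_eq_prod_pow_card_Ioi]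

end StickBreaking

theorem jacobian_dirichlet_transform_general {k : ℕ} :
    Differentiable ℝ
      (fun y : Fin k → ℝ => fun j => y j * ∏ i ∈ Finset.Iio j, (1 - y i)) ∧
    (∀ y : Fin k → ℝ,
      (fderiv ℝ (fun y : Fin k → ℝ =>
          fun j => y j * ∏ i ∈ Finset.Iio j, (1 - y i)) y).det
        = ∏ j, (1 - y j) ^ (k - 1 - (j : ℕ))) ∧
    (∀ y : Fin k → ℝ, (∀ j, y j ∈ Set.Ioo (0 : ℝ) 1) →
      |(fderiv ℝ (fun y : Fin k → ℝ =>
          fun j => y j * ∏ i ∈ Finset.Iio j, (1 - y i)) y).det|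
        = ∏ j, (1 - y j) ^ (k - 1 - (j : ℕ))) := by
  change Differentiable ℝ stickBreaking ∧ (∀ y, (fderiv ℝ stickBreaking y).det = _) ∧
    ∀ y, _ → |(fderiv ℝ stickBreaking y).det| = _
  have hdet (y : Fin k → ℝ) :
      (fderiv ℝ stickBreaking y).det = ∏ j, (1 - y j) ^ (k - 1 - (j : ℕ)) := by
    simp only [det_fderiv_stickBreaking, Fin.card_Ioi]
  refine ⟨fun y => (hasFDerivAt_stickBreaking y).differentiableAt, hdet, fun y hy => ?_⟩
  rw [hdet, abs_of_nonneg]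
  exact prod_nonneg fun j _ => pow_nonneg (sub_nonneg.2 (hy j).2.le) _

/-- The map `Φ(y)_j = y_j ∏_{i<j} (1 − y_i)` (the inverse of
`y_j = x_j/(1−x_1−⋯−x_{j−1})`) is differentiable, its Jacobian determinant at `y`
equals `∏_{j=1}^k (1−y_j)^{k−j}`, and in particular on the open cube `(0,1)^k` the
absolute value of the Jacobian determinant equals the same product. -/
theorem jacobian_dirichlet_transform {k : ℕ} (hk : 1 ≤ k) :
    Differentiable ℝ
      (fun y : Fin k → ℝ => fun j => y j * ∏ i ∈ Finset.Iio j, (1 - y i)) ∧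
    (∀ y : Fin k → ℝ,
      (fderiv ℝ (fun y : Fin k → ℝ =>
          fun j => y j * ∏ i ∈ Finset.Iio j, (1 - y i)) y).det
        = ∏ j, (1 - y j) ^ (k - 1 - (j : ℕ))) ∧
    (∀ y : Fin k → ℝ, (∀ j, y j ∈ Set.Ioo (0 : ℝ) 1) →
      |(fderiv ℝ (fun y : Fin k → ℝ =>
          fun j => y j * ∏ i ∈ Finset.Iio j, (1 - y i)) y).det|
        = ∏ j, (1 - y j) ^ (k - 1 - (j : ℕ))) :=
  jacobian_dirichlet_transform_general
end

section
/- Let a > 0, η > 0, ζ > −1 and u > 0 be fixed real numbers. For q < 1 with a(1−q)u < 1, let f_q(u) = c_q · u^{ζ}[1 − a(1−q)u]^{η/(1−q)} with c_q = [a(1−q)]^{ζ+1} Γ(ζ + η/(1−q) + 2)/(Γ(ζ+1) Γ(η/(1−q) + 1)). Then as q → 1 from the left, f_q(u) converges to (aη)^{ζ+1} u^{ζ} e^{−aηu}/Γ(ζ+1), i.e. the pathway density converges pointwise on (0,∞) to the gamma density with shape parameter ζ+1 and rate parameter aη. -/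
/-!
By log-convexity of `Γ` (Wendel's inequalities), `Γ(x + c) ~ Γ(x) x^c` as `x → ∞` for every
`c ≥ 0`. Writing `x = η/(1-q) → ∞`, so that `a(1-q) = aη/x`, the normalising constant becomes
`(aη)^{ζ+1} Γ(x + ζ + 2) / (Γ(ζ+1) Γ(x) x^{ζ+2})`, which tends to `(aη)^{ζ+1}/Γ(ζ+1)`, while
`(1 - aηu/x)^x → e^{-aηu}`.
-/

open Filter Real Topology

namespace Real

variable {x c : ℝ}

theorem Gamma_add_le_Gamma_mul_rpow (hx : 0 < x) (hc : 0 < c) (hc1 : c < 1) :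
    Gamma (x + c) ≤ Gamma x * x ^ c := by
  have hΓ : 0 < Gamma x := Gamma_pos_of_pos hx
  calc Gamma (x + c) = Gamma ((1 - c) * x + c * (x + 1)) := by ring_nf
    _ ≤ Gamma x ^ (1 - c) * Gamma (x + 1) ^ c :=
      Gamma_mul_add_mul_le_rpow_Gamma_mul_rpow_Gamma hx (by linarith) (by linarith) hc (by ring)
    _ = Gamma x * x ^ c := by
      rw [Gamma_add_one hx.ne', mul_rpow hx.le hΓ.le, mul_left_comm, ← rpow_add hΓ,
        sub_add_cancel, rpow_one, mul_comm]

theorem mul_Gamma_le_Gamma_add_mul_rpow (hx : 0 < x) (hc : 0 < c) (hc1 : c < 1) :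
    x * Gamma x ≤ Gamma (x + c) * (x + c) ^ (1 - c) := by
  have hxc : 0 < x + c := by linarith
  have hΓ : 0 < Gamma (x + c) := Gamma_pos_of_pos hxc
  calc x * Gamma x = Gamma (c * (x + c) + (1 - c) * (x + c + 1)) := by
        rw [← Gamma_add_one hx.ne']; ring_nf
    _ ≤ Gamma (x + c) ^ c * Gamma (x + c + 1) ^ (1 - c) :=
      Gamma_mul_add_mul_le_rpow_Gamma_mul_rpow_Gamma hxc (by linarith) hc (by linarith) (by ring)
    _ = Gamma (x + c) * (x + c) ^ (1 - c) := by
      rw [Gamma_add_one hxc.ne', mul_rpow hxc.le hΓ.le, mul_left_comm, ← rpow_add hΓ,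
        add_sub_cancel, rpow_one, mul_comm]

theorem tendsto_Gamma_add_div_Gamma_mul_rpow_of_lt_one (hc : 0 ≤ c) (hc1 : c < 1) :
    Tendsto (fun x ↦ Gamma (x + c) / (Gamma x * x ^ c)) atTop (𝓝 1) := by
  rcases hc.eq_or_lt with rfl | hc
  · refine tendsto_const_nhds.congr' ?_
    filter_upwards [eventually_gt_atTop 0] with x hx
    rw [add_zero, rpow_zero, mul_one, div_self (Gamma_pos_of_pos hx).ne']
  have hlower : Tendsto (fun x : ℝ ↦ (x / (x + c)) ^ (1 - c)) atTop (𝓝 1) := by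
    have h : Tendsto (fun x : ℝ ↦ 1 - c / (x + c)) atTop (𝓝 1) := by
      simpa using ((tendsto_atTop_add_const_right _ c tendsto_id).const_div_atTop c).const_sub 1
    have heq : (fun x : ℝ ↦ 1 - c / (x + c)) =ᶠ[atTop] fun x ↦ x / (x + c) := by
      filter_upwards [eventually_gt_atTop 0] with x hx
      field_simp
      ring
    simpa using (h.congr' heq).rpow_const (p := 1 - c) (Or.inl one_ne_zero)
  refine tendsto_of_tendsto_of_tendsto_of_le_of_le' hlower tendsto_const_nhds ?_ ?_
  all_goals filter_upwards [eventually_gt_atTop 0] with x hx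
  · have hxc : 0 < x + c := by linarith
    rw [div_rpow hx.le hxc.le, div_le_div_iff₀ (by positivity) (by positivity)]
    calc x ^ (1 - c) * (Gamma x * x ^ c) = x * Gamma x := by
          rw [mul_left_comm, ← rpow_add hx, sub_add_cancel, rpow_one, mul_comm]
      _ ≤ Gamma (x + c) * (x + c) ^ (1 - c) := mul_Gamma_le_Gamma_add_mul_rpow hx hc hc1
  · rw [div_le_one (by have := Gamma_pos_of_pos hx; positivity)]
    exact Gamma_add_le_Gamma_mul_rpow hx hc hc1

theorem tendsto_Gamma_add_div_Gamma_mul_rpow_add_one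
    (h : Tendsto (fun x ↦ Gamma (x + c) / (Gamma x * x ^ c)) atTop (𝓝 1)) :
    Tendsto (fun x ↦ Gamma (x + (c + 1)) / (Gamma x * x ^ (c + 1))) atTop (𝓝 1) := by
  have hshift : Tendsto (fun x : ℝ ↦ 1 + c / x) atTop (𝓝 1) := by
    simpa using (tendsto_id.const_div_atTop c).const_add 1
  have hprod := h.mul hshift
  rw [mul_one] at hprod
  refine hprod.congr' ?_
  filter_upwards [eventually_gt_atTop 0, eventually_gt_atTop (-c)] with x hx hxc
  rw [← add_assoc, Gamma_add_one (by linarith), rpow_add_one hx.ne']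
  field_simp

theorem tendsto_Gamma_add_div_Gamma_mul_rpow (hc : 0 ≤ c) :
    Tendsto (fun x ↦ Gamma (x + c) / (Gamma x * x ^ c)) atTop (𝓝 1) := by
  obtain ⟨n, t, ht0, ht1, rfl⟩ : ∃ (n : ℕ) (t : ℝ), 0 ≤ t ∧ t < 1 ∧ c = t + n :=
    ⟨⌊c⌋₊, c - ⌊c⌋₊, sub_nonneg.2 (Nat.floor_le hc),
      by linarith [Nat.lt_floor_add_one c], by ring⟩
  induction n with
  | zero => simpa using tendsto_Gamma_add_div_Gamma_mul_rpow_of_lt_one ht0 ht1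
  | succ n ih =>
    push_cast
    rw [← add_assoc]
    exact tendsto_Gamma_add_div_Gamma_mul_rpow_add_one (ih (by positivity))

end Real

theorem tendsto_div_one_sub_nhdsLT_one_atTop {η : ℝ} (hη : 0 < η) :
    Tendsto (fun q : ℝ ↦ η / (1 - q)) (𝓝[<] 1) atTop := by
  have h : Tendsto (fun q : ℝ ↦ 1 - q) (𝓝[<] 1) (𝓝[>] 0) := by
    refine tendsto_nhdsWithin_of_tendsto_nhds_of_eventually_within _ ?_ ?_
    · simpa using ((continuous_sub_left (1 : ℝ)).tendsto 1).mono_left nhdsWithin_le_nhds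
    · filter_upwards [self_mem_nhdsWithin] with q (hq : q < 1)
      exact sub_pos.2 hq
  simpa [div_eq_mul_inv] using h.inv_tendsto_nhdsGT_zero.const_mul_atTop hη

/-- The pathway density in the variable `x = η / (1 - q)`, with rate `b = aη`. -/
theorem tendsto_pathway_atTop {b ζ : ℝ} (u : ℝ) (hb : 0 ≤ b) (hζ : -2 < ζ) :
    Tendsto (fun x : ℝ ↦ (b / x) ^ (ζ + 1) * Gamma (ζ + x + 2) / (Gamma (ζ + 1) * Gamma (x + 1)) *
        (u ^ ζ * (1 - b * u / x) ^ x))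
      atTop (𝓝 (b ^ (ζ + 1) * u ^ ζ * exp (-(b * u)) / Gamma (ζ + 1))) := by
  have hratio := tendsto_Gamma_add_div_Gamma_mul_rpow (c := ζ + 2) (by linarith)
  have hexp := tendsto_one_add_div_rpow_exp (-(b * u))
  have hprod := (hratio.mul hexp).const_mul (b ^ (ζ + 1) * u ^ ζ / Gamma (ζ + 1))
  rw [show b ^ (ζ + 1) * u ^ ζ / Gamma (ζ + 1) * (1 * exp (-(b * u))) =
    b ^ (ζ + 1) * u ^ ζ * exp (-(b * u)) / Gamma (ζ + 1) by ring] at hprod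
  refine hprod.congr' ?_
  filter_upwards [eventually_gt_atTop 0] with x hx
  have hΓ : Gamma x ≠ 0 := (Gamma_pos_of_pos hx).ne'
  rw [div_rpow hb hx.le, Gamma_add_one hx.ne', show ζ + x + 2 = x + (ζ + 2) by ring,
    show ζ + 2 = ζ + 1 + 1 by ring, rpow_add_one hx.ne', neg_div, ← sub_eq_add_neg]
  field_simp

theorem pathway_tendsto_gamma_general (a η ζ u : ℝ)
    (ha : 0 < a) (hη : 0 < η) (hζ : -1 < ζ) :
    Filter.Tendsto
      (fun q : ℝ =>
        (a * (1 - q)) ^ (ζ + 1) * Real.Gamma (ζ + η / (1 - q) + 2) /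
            (Real.Gamma (ζ + 1) * Real.Gamma (η / (1 - q) + 1)) *
          (u ^ ζ * (1 - a * (1 - q) * u) ^ (η / (1 - q))))
      (nhdsWithin 1 {q : ℝ | q < 1 ∧ a * (1 - q) * u < 1})
      (nhds ((a * η) ^ (ζ + 1) * u ^ ζ * Real.exp (-(a * η * u)) /
        Real.Gamma (ζ + 1))) := by
  have hx : Tendsto (fun q : ℝ ↦ η / (1 - q)) (𝓝[{q | q < 1 ∧ a * (1 - q) * u < 1}] 1) atTop :=
    (tendsto_div_one_sub_nhdsLT_one_atTop hη).mono_left (nhdsWithin_mono 1 fun _ hq ↦ hq.1)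
  refine ((tendsto_pathway_atTop u (by positivity) (by linarith)).comp hx).congr fun q ↦ ?_
  have hscale : a * η / (η / (1 - q)) = a * (1 - q) := by
    rw [div_div_eq_mul_div]
    field_simp
  simp only [Function.comp_apply, mul_div_right_comm (a * η) u, hscale]

/-- (1.18): for fixed `a > 0`, `η > 0`, `ζ > −1` and `u > 0`, the pathway density
`f_q(u) = c_q u^ζ [1 − a(1−q)u]^{η/(1−q)}`, with
`c_q = [a(1−q)]^{ζ+1} Γ(ζ+η/(1−q)+2)/(Γ(ζ+1)Γ(η/(1−q)+1))`, converges as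
`q → 1⁻` (through values with `a(1−q)u < 1`) to the gamma density
`(aη)^{ζ+1} u^ζ e^{−aηu}/Γ(ζ+1)` with shape `ζ+1` and rate `aη`. -/
theorem pathway_tendsto_gamma (a η ζ u : ℝ)
    (ha : 0 < a) (hη : 0 < η) (hζ : -1 < ζ) (hu : 0 < u) :
    Filter.Tendsto
      (fun q : ℝ =>
        (a * (1 - q)) ^ (ζ + 1) * Real.Gamma (ζ + η / (1 - q) + 2) /
            (Real.Gamma (ζ + 1) * Real.Gamma (η / (1 - q) + 1)) *
          (u ^ ζ * (1 - a * (1 - q) * u) ^ (η / (1 - q))))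
      (nhdsWithin 1 {q : ℝ | q < 1 ∧ a * (1 - q) * u < 1})
      (nhds ((a * η) ^ (ζ + 1) * u ^ ζ * Real.exp (-(a * η * u)) /
        Real.Gamma (ζ + 1))) :=
  pathway_tendsto_gamma_general a η ζ u ha hη hζ
end
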